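/- Let X be a d×d real symmetric PSD matrix with eigenvalues λ_1 ≥ … ≥ λ_d and eigengap Δ_k := λ_k − λ_{k+1}, and let V ∈ ℝ^{d×k} have as columns orthonormal eigenvectors for the k largest eigenvalues of X. Then for every U ∈ ℝ^{d×k} with orthonormal columns, Δ_k·(k − ‖Uᵀ V‖_F²) ≤ Tr(V Vᵀ X) − Tr(U Uᵀ X). (The quantity k − ‖UᵀV‖_F² equals the squared Frobenius norm of the sine of the principal angles between the column spans of U and V.) -/
import Mathlib


open Matrix

/-- Squared Frobenius norm of a real matrix. -/
noncomputable def frobSq {m n : ℕ} (A : Matrix (Fin m) (Fin n) ℝ) : ℝ :=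
  ∑ i, ∑ j, (A i j) ^ 2

lemma sum_castLE_eq_filter {d k : ℕ} (hk1 : 0 < k) (h : k ≤ d) (f : Fin d → ℝ) :
    ∑ b : Fin k, f (Fin.castLE h b)
      = ∑ i ∈ Finset.univ.filter (fun i : Fin d => (i : ℕ) < k), f i := by
  refine Finset.sum_nbij' (fun b => Fin.castLE h b)
    (fun i => ⟨(i : ℕ) % k, Nat.mod_lt _ hk1⟩) ?_ ?_ ?_ ?_ ?_
  · intro a _; simp [Fin.castLE, a.isLt]
  · intro a _; simp
  · intro a _; exact Fin.ext (by simp [Nat.mod_eq_of_lt a.isLt])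
  · intro a ha
    simp only [Finset.mem_filter] at ha
    exact Fin.ext (by simp [Nat.mod_eq_of_lt ha.2])
  · intro a _; rfl

/-- **Sine-squared bound by the trace gap.**
Let `X` be `d × d` symmetric PSD with eigenvalues `μ 0 ≥ … ≥ μ (d-1)` (via an
orthogonal eigendecomposition with nonincreasing, nonnegative `μ`), eigengap
`Δ_k = μ (k-1) - μ k` (0-based), and let `V` consist of orthonormal eigenvectors
for the `k` largest eigenvalues (the first `k` columns of `Q`).  Then for every
`U` with orthonormal columns,
`Δ_k (k - ‖Uᵀ V‖_F²) ≤ Tr(V Vᵀ X) - Tr(U Uᵀ X)`.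
(Here `k - ‖Uᵀ V‖_F²` is the squared Frobenius norm of the sines of the principal
angles between the column spans of `U` and `V`.) -/
theorem eigengap_sineSq_le_trace_gap {d k : ℕ} (hk1 : 1 ≤ k) (hkd : k < d)
    (X Q : Matrix (Fin d) (Fin d) ℝ) (μ : Fin d → ℝ)
    (hQ : Qᵀ * Q = 1) (hdecomp : X = Q * Matrix.diagonal μ * Qᵀ)
    (hmono : ∀ i j : Fin d, i ≤ j → μ j ≤ μ i)
    (hpos : ∀ i, 0 ≤ μ i)
    (V : Matrix (Fin d) (Fin k) ℝ)
    (hV : ∀ (i : Fin d) (j : Fin k), V i j = Q i (Fin.castLE hkd.le j)) :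
    ∀ U : Matrix (Fin d) (Fin k) ℝ, Uᵀ * U = 1 →
      (μ ⟨k - 1, by omega⟩ - μ ⟨k, hkd⟩) * ((k : ℝ) - frobSq (Uᵀ * V)) ≤
        (V * Vᵀ * X).trace - (U * Uᵀ * X).trace := by
  intro U hU
  have hQQ : Q * Qᵀ = 1 := mul_eq_one_comm.mp hQ
  set W : Matrix (Fin d) (Fin k) ℝ := Qᵀ * U with hWdef
  have hWW : Wᵀ * W = 1 := by
    rw [hWdef, transpose_mul, transpose_transpose, ← Matrix.mul_assoc, Matrix.mul_assoc Uᵀ, hQQ, Matrix.mul_one, hU]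
  -- row sums of squares of W
  set s : Fin d → ℝ := fun i => ∑ a, (W i a) ^ 2 with hsdef
  have hs_eq : ∀ i, (W * Wᵀ) i i = s i := by
    intro i; simp [Matrix.mul_apply, hsdef, sq]
  have hs_nonneg : ∀ i, 0 ≤ s i := fun i =>
    Finset.sum_nonneg fun a _ => sq_nonneg _
  -- s i ≤ 1 via the projection 1 - W Wᵀ
  have hs_le_one : ∀ i, s i ≤ 1 := by
    intro i
    set P : Matrix (Fin d) (Fin d) ℝ := 1 - W * Wᵀ with hPdef
    have hPsymm : Pᵀ = P := by
      rw [hPdef]; simp [transpose_sub, transpose_mul, transpose_transpose, mul_assoc]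
    have hPP : P * P = P := by
      rw [hPdef]
      have : W * Wᵀ * (W * Wᵀ) = W * Wᵀ := by
        rw [Matrix.mul_assoc W Wᵀ, ← Matrix.mul_assoc Wᵀ W Wᵀ, hWW, Matrix.one_mul]
      simp [sub_mul, mul_sub, this]
    have h1 : P i i = ∑ j, (P i j) ^ 2 := by
      conv_lhs => rw [← hPP]
      rw [Matrix.mul_apply]
      refine Finset.sum_congr rfl fun j _ => ?_
      have : P j i = P i j := by
        conv_lhs => rw [← hPsymm]
        rfl
      rw [this, sq]
    have h2 : 0 ≤ P i i := h1 ▸ Finset.sum_nonneg fun j _ => sq_nonneg _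
    have h3 : P i i = 1 - s i := by
      rw [hPdef]; simp [Matrix.sub_apply, hs_eq i, Matrix.one_apply]
    linarith [h3 ▸ h2]
  -- total sum of s equals k
  have hsum : ∑ i, s i = (k : ℝ) := by
    have : ∑ i, s i = (W * Wᵀ).trace := by
      simp [Matrix.trace, Matrix.diag, hs_eq]
    rw [this, Matrix.trace_mul_comm, hWW, Matrix.trace_one]
    simp
  -- generic trace formula
  have traceAux : ∀ A : Matrix (Fin d) (Fin k) ℝ,
      (A * Aᵀ * X).trace = ∑ i, (∑ a, ((Qᵀ * A) i a) ^ 2) * μ i := by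
    intro A
    have h3 : Aᵀ * X * A = (Qᵀ * A)ᵀ * Matrix.diagonal μ * (Qᵀ * A) := by
      rw [hdecomp]
      simp only [transpose_mul, transpose_transpose, Matrix.mul_assoc]
    rw [Matrix.trace_mul_cycle, Matrix.trace_mul_cycle, h3, Matrix.trace_mul_cycle]
    rw [Matrix.trace]
    refine Finset.sum_congr rfl fun i _ => ?_
    rw [Matrix.diag, Matrix.mul_diagonal]
    congr 1
    simp [Matrix.mul_apply, sq, mul_comm]
  -- Qᵀ V entries
  have hQV : ∀ (i : Fin d) (j : Fin k),
      (Qᵀ * V) i j = if i = Fin.castLE hkd.le j then 1 else 0 := by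
    intro i j
    have : (Qᵀ * V) i j = (Qᵀ * Q) i (Fin.castLE hkd.le j) := by
      simp [Matrix.mul_apply, hV]
    rw [this, hQ, Matrix.one_apply]
  have hsV : ∀ i : Fin d, (∑ a, ((Qᵀ * V) i a) ^ 2) = if (i : ℕ) < k then 1 else 0 := by
    intro i
    by_cases hik : (i : ℕ) < k
    · rw [if_pos hik, Finset.sum_eq_single (⟨(i : ℕ), hik⟩ : Fin k)]
      · rw [hQV]
        have : i = Fin.castLE hkd.le (⟨(i : ℕ), hik⟩ : Fin k) := Fin.ext rfl
        simp [← this]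
      · intro b _ hb
        have hne : ¬ i = Fin.castLE hkd.le b := by
          intro hc
          exact hb (Fin.ext (by simpa [Fin.castLE, Fin.ext_iff] using hc.symm))
        rw [hQV]; simp [hne]
      · intro h; exact absurd (Finset.mem_univ _) h
    · rw [if_neg hik]
      refine Finset.sum_eq_zero fun a _ => ?_
      have hne : ¬ i = Fin.castLE hkd.le a := by
        intro hc; apply hik; rw [hc]; exact a.isLt
      rw [hQV]; simp [hne]
  -- the two traces
  set T : Finset (Fin d) := Finset.univ.filter (fun i : Fin d => (i : ℕ) < k) with hT
  have htrV : (V * Vᵀ * X).trace = ∑ i ∈ T, μ i := by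
    rw [traceAux V]
    have : ∀ i : Fin d, (∑ a, ((Qᵀ * V) i a) ^ 2) * μ i
        = if (i : ℕ) < k then μ i else 0 := by
      intro i; rw [hsV i]; by_cases h : (i : ℕ) < k <;> simp [h]
    rw [Finset.sum_congr rfl fun i _ => this i, hT, Finset.sum_filter]
  have htrU : (U * Uᵀ * X).trace = ∑ i, s i * μ i := by
    rw [traceAux U]
  -- frobSq (Uᵀ V)
  have hfrob : frobSq (Uᵀ * V) = ∑ i ∈ T, s i := by
    have hUV : ∀ (a : Fin k) (b : Fin k),
        (Uᵀ * V) a b = W (Fin.castLE hkd.le b) a := by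
      intro a b
      simp only [Matrix.mul_apply, hWdef, Matrix.transpose_apply]
      refine Finset.sum_congr rfl fun m _ => ?_
      rw [hV]; ring
    rw [frobSq, Finset.sum_comm]
    have : ∀ b : Fin k, (∑ a, ((Uᵀ * V) a b) ^ 2) = s (Fin.castLE hkd.le b) := by
      intro b
      rw [hsdef]
      exact Finset.sum_congr rfl fun a _ => by rw [hUV]
    rw [Finset.sum_congr rfl fun b _ => this b,
      sum_castLE_eq_filter hk1 hkd.le s, hT]
  -- cardinality of T as a sum
  have hcardT : ∑ i ∈ T, (1 : ℝ) = (k : ℝ) := by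
    rw [hT, ← sum_castLE_eq_filter hk1 hkd.le (fun _ => (1 : ℝ))]
    simp
  -- split the total sums
  have hsplit_s : ∑ i ∈ T, s i + ∑ i ∈ Tᶜ, s i = (k : ℝ) := by
    rw [Finset.sum_add_sum_compl, hsum]
  have hsplit_sμ : ∑ i, s i * μ i = ∑ i ∈ T, s i * μ i + ∑ i ∈ Tᶜ, s i * μ i := by
    rw [Finset.sum_add_sum_compl]
  set p : Fin d := ⟨k - 1, by omega⟩ with hp
  set q : Fin d := ⟨k, hkd⟩ with hq
  -- key inequalities
  have hbound1 : μ p * (∑ i ∈ T, (1 - s i)) ≤ ∑ i ∈ T, μ i * (1 - s i) := by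
    rw [Finset.mul_sum]
    refine Finset.sum_le_sum fun i hi => ?_
    have hik : (i : ℕ) < k := by
      rw [hT] at hi; exact (Finset.mem_filter.mp hi).2
    have hip : i ≤ p := by rw [Fin.le_def]; show (i : ℕ) ≤ k - 1; omega
    exact mul_le_mul_of_nonneg_right (hmono i p hip) (by linarith [hs_le_one i])
  have hbound2 : ∑ i ∈ Tᶜ, s i * μ i ≤ μ q * (∑ i ∈ Tᶜ, s i) := by
    rw [Finset.mul_sum]
    refine Finset.sum_le_sum fun i hi => ?_
    have hik : ¬ (i : ℕ) < k := by
      rw [hT] at hi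
      simpa using (Finset.mem_compl.mp hi)
    have hqi : q ≤ i := by rw [Fin.le_def]; show k ≤ (i : ℕ); omega
    calc s i * μ i ≤ s i * μ q := mul_le_mul_of_nonneg_left (hmono q i hqi) (hs_nonneg i)
      _ = μ q * s i := by ring
  -- assemble
  rw [htrV, htrU, hfrob, hsplit_sμ]
  have e1 : ∑ i ∈ T, μ i * (1 - s i) = ∑ i ∈ T, μ i - ∑ i ∈ T, s i * μ i := by
    rw [← Finset.sum_sub_distrib]
    exact Finset.sum_congr rfl fun i _ => by ring
  have e2 : ∑ i ∈ T, (1 - s i) = (k : ℝ) - ∑ i ∈ T, s i := by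
    rw [Finset.sum_sub_distrib, hcardT]
  rw [e2, e1] at hbound1
  have e3 : μ q * (∑ i ∈ Tᶜ, s i) = μ q * ((k : ℝ) - ∑ i ∈ T, s i) := by
    have : (∑ i ∈ Tᶜ, s i) = (k : ℝ) - ∑ i ∈ T, s i := by linarith
    rw [this]
  have e4 : (μ p - μ q) * ((k : ℝ) - ∑ i ∈ T, s i)
      = μ p * ((k : ℝ) - ∑ i ∈ T, s i) - μ q * ((k : ℝ) - ∑ i ∈ T, s i) := by ring
  linarith
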